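/- Under the assumptions of the descent theorem with the stronger step-size bound α ≤ 1/(Mγ² + L(1+ν²)), each SPGD step satisfies E_k[F(x_{k+1})] − F(x_k) ≤ −(α/2)‖R(x_k)‖². -/

import Mathlib

/-!
Integrating the descent lemma `F y ≤ F x + ⟪∇F x, y - x⟫ + L/2 ‖y - x‖²` over the random step
splits `E[F x₊] - F x` into a bias term `⟪∇F x, E x₊ - Q x⟫ ≤ M γ²/2 ‖Q x - x‖²`, the
deterministic decrease `⟪∇F x, Q x - x⟫ ≤ -‖Q x - x‖² / α` coming from the variational inequality
of the projection, and a second-moment term `L/2 E‖x₊ - x‖² ≤ L(1+ν²)/2 ‖Q x - x‖²`. The step-size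
bound makes the sum at most `-‖Q x - x‖² / (2α) = -(α/2) ‖R x‖²`.
-/

open MeasureTheory
open scoped RealInnerProductSpace

section
variable {E : Type*} [NormedAddCommGroup E] [InnerProductSpace ℝ E]

theorem real_inner_sub_le_zero_of_forall_norm_sub_le {C : Set E} (hC : Convex ℝ C)
    {u p : E} (hp : p ∈ C) (hmin : ∀ z ∈ C, ‖u - p‖ ≤ ‖u - z‖) {z : E} (hz : z ∈ C) :
    ⟪u - p, z - p⟫ ≤ 0 := by
  have : Nonempty C := ⟨⟨p, hp⟩⟩
  refine (norm_eq_iInf_iff_real_inner_le_zero hC hp).mp (le_antisymm ?_ ?_) z hz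
  · exact le_ciInf fun w => hmin w w.2
  · exact ciInf_le ⟨0, by rintro b ⟨w, rfl⟩; positivity⟩ (⟨p, hp⟩ : C)

theorem sq_norm_sub_le_mul_inner_of_projected_step {C : Set E} (hC : Convex ℝ C) {x g q : E}
    {α : ℝ} (hx : x ∈ C) (hq : q ∈ C) (hmin : ∀ z ∈ C, ‖x - α • g - q‖ ≤ ‖x - α • g - z‖) :
    ‖x - q‖ ^ 2 ≤ α * ⟪g, x - q⟫ := by
  have hvi := real_inner_sub_le_zero_of_forall_norm_sub_le hC hq hmin hx
  rw [show x - α • g - q = (x - q) - α • g by abel, inner_sub_left, real_inner_smul_left,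
    real_inner_self_eq_norm_sq] at hvi
  linarith

theorem norm_inv_smul_sub_sq (α : ℝ) (x y : E) : ‖α⁻¹ • (x - y)‖ ^ 2 = ‖y - x‖ ^ 2 / α ^ 2 := by
  rw [norm_smul, norm_inv, Real.norm_eq_abs, mul_pow, inv_pow, sq_abs, norm_sub_rev, inv_mul_eq_div]

variable [CompleteSpace E]

theorem le_add_inner_gradient_add_sq_of_lipschitz_gradient {F : E → ℝ}
    (hF : Differentiable ℝ F) {L : ℝ} {x : E}
    (hlip : ∀ z, ‖gradient F z - gradient F x‖ ≤ L * ‖z - x‖) (y : E) :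
    F y ≤ F x + ⟪gradient F x, y - x⟫ + L / 2 * ‖y - x‖ ^ 2 := by
  set v := y - x
  -- `t ↦ F (x + t v)` minus its quadratic model is antitone on `[0, 1]`
  set φ : ℝ → ℝ := fun t => F (x + t • v) - t * ⟪gradient F x, v⟫ - L / 2 * t ^ 2 * ‖v‖ ^ 2
  have hφ : ∀ t, HasDerivAt φ
      (⟪gradient F (x + t • v), v⟫ - ⟪gradient F x, v⟫ - L * t * ‖v‖ ^ 2) t := by
    intro t
    have hline : HasDerivAt (fun t : ℝ => x + t • v) v t := by
      simpa using ((hasDerivAt_id t).smul_const v).const_add x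
    have hF' := (hF (x + t • v)).hasGradientAt.hasFDerivAt.comp_hasDerivAt t hline
    refine ((hF'.sub ((hasDerivAt_id t).mul_const ⟪gradient F x, v⟫)).sub
      (((hasDerivAt_pow 2 t).const_mul (L / 2)).mul_const (‖v‖ ^ 2))).congr_deriv ?_
    simp only [InnerProductSpace.toDual_apply_apply]
    push_cast
    ring
  have hmono : AntitoneOn φ (Set.Icc 0 1) := by
    refine antitoneOn_of_hasDerivWithinAt_nonpos (convex_Icc 0 1)
      (fun t _ => (hφ t).continuousAt.continuousWithinAt) (fun t _ => (hφ t).hasDerivWithinAt)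
      fun t ht => ?_
    rw [interior_Icc] at ht
    have hdist : ‖(x + t • v) - x‖ = t * ‖v‖ := by
      rw [add_sub_cancel_left, norm_smul, Real.norm_of_nonneg ht.1.le]
    calc ⟪gradient F (x + t • v), v⟫ - ⟪gradient F x, v⟫ - L * t * ‖v‖ ^ 2
        = ⟪gradient F (x + t • v) - gradient F x, v⟫ - L * t * ‖v‖ ^ 2 := by
          rw [inner_sub_left]
      _ ≤ ‖gradient F (x + t • v) - gradient F x‖ * ‖v‖ - L * t * ‖v‖ ^ 2 := by
          gcongr; exact real_inner_le_norm _ _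
      _ ≤ L * (t * ‖v‖) * ‖v‖ - L * t * ‖v‖ ^ 2 := by
          gcongr; exact hdist ▸ hlip _
      _ = 0 := by ring
  have h10 := hmono (by simp) (by simp) zero_le_one
  simp only [φ, one_smul, zero_smul, add_zero, one_mul, zero_mul, sub_zero, one_pow,
    ne_eq, OfNat.ofNat_ne_zero, not_false_eq_true, zero_pow, mul_zero] at h10
  simp only [v, add_sub_cancel] at h10
  linarith

theorem integral_le_add_inner_gradient_add_sq_of_lipschitz_gradient {Ω : Type*}
    [MeasurableSpace Ω] {μ : Measure Ω} [IsProbabilityMeasure μ] {F : E → ℝ}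
    (hF : Differentiable ℝ F) {L : ℝ} {x : E}
    (hlip : ∀ z, ‖gradient F z - gradient F x‖ ≤ L * ‖z - x‖) {Y : Ω → E}
    (hY : Integrable Y μ) (hFY : Integrable (fun ω => F (Y ω)) μ)
    (hY₂ : Integrable (fun ω => ‖Y ω - x‖ ^ 2) μ) :
    ∫ ω, F (Y ω) ∂μ ≤ F x + ⟪gradient F x, (∫ ω, Y ω ∂μ) - x⟫ + L / 2 * ∫ ω, ‖Y ω - x‖ ^ 2 ∂μ := by
  have hdiff : Integrable (fun ω => Y ω - x) μ := hY.sub (integrable_const x)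
  have hinner : Integrable (fun ω => ⟪gradient F x, Y ω - x⟫) μ := hdiff.const_inner _
  have hlin : Integrable (fun ω => F x + ⟪gradient F x, Y ω - x⟫) μ :=
    (integrable_const _).add hinner
  calc ∫ ω, F (Y ω) ∂μ
      ≤ ∫ ω, (F x + ⟪gradient F x, Y ω - x⟫ + L / 2 * ‖Y ω - x‖ ^ 2) ∂μ :=
        integral_mono hFY (hlin.add (hY₂.const_mul _))
          fun ω => le_add_inner_gradient_add_sq_of_lipschitz_gradient hF hlip (Y ω)
    _ = F x + ⟪gradient F x, (∫ ω, Y ω ∂μ) - x⟫ + L / 2 * ∫ ω, ‖Y ω - x‖ ^ 2 ∂μ := by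
        rw [integral_add hlin (hY₂.const_mul _),
          integral_add (integrable_const _) hinner, integral_const_mul,
          integral_inner hdiff, integral_sub hY (integrable_const x)]
        simp

end

theorem stmt_10_general {n : ℕ} {Ω : Type*} [MeasurableSpace Ω]
    (μ : Measure Ω) [IsProbabilityMeasure μ]
    (F : EuclideanSpace ℝ (Fin n) → ℝ) (hF_diff : ContDiff ℝ 1 F)
    (L : ℝ) (hL : 0 < L)
    (hF_smooth : ∀ x y, ‖gradient F x - gradient F y‖ ≤ L * ‖x - y‖)
    (C : Set (EuclideanSpace ℝ (Fin n)))
    (hC_convex : Convex ℝ C)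
    (P : EuclideanSpace ℝ (Fin n) → EuclideanSpace ℝ (Fin n))
    (hP_mem : ∀ y, P y ∈ C)
    (hP_min : ∀ y, ∀ z ∈ C, ‖y - P y‖ ≤ ‖y - z‖)
    (α : ℝ) (hα : 0 < α)
    (x : EuclideanSpace ℝ (Fin n)) (hx : x ∈ C)
    -- the random subsampled projected-gradient step `x₊ = Q_S(x)`
    (Qs : Ω → EuclideanSpace ℝ (Fin n))
    (hQs_int : Integrable Qs μ)
    (hFQs_int : Integrable (fun ω => F (Qs ω)) μ)
    (hRs_int : Integrable (fun ω => ‖α⁻¹ • (x - Qs ω)‖ ^ 2) μ)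
    -- gradient bound on an open set containing the iterates
    (M : ℝ) (U : Set (EuclideanSpace ℝ (Fin n)))
    (hxU : x ∈ U)
    (hgrad_bdd : ∀ y ∈ U, ‖gradient F y‖ ≤ M)
    (ν γ : ℝ)
    (hnorm : ∫ ω, ‖α⁻¹ • (x - Qs ω)‖ ^ 2 ∂μ ≤
      (1 + ν ^ 2) * ‖α⁻¹ • (x - P (x - α • gradient F x))‖ ^ 2)
    (hbias : ‖∫ ω, (Qs ω - P (x - α • gradient F x)) ∂μ‖ ≤
      γ ^ 2 / 2 * ‖P (x - α • gradient F x) - x‖ ^ 2)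
    (hstep : α ≤ 1 / (M * γ ^ 2 + L * (1 + ν ^ 2))) :
    (∫ ω, F (Qs ω) ∂μ) - F x ≤
      -(α / 2) * ‖α⁻¹ • (x - P (x - α • gradient F x))‖ ^ 2 := by
  set g := gradient F x
  set Q := P (x - α • g)
  set s := ‖x - Q‖ ^ 2
  simp only [norm_inv_smul_sub_sq] at hRs_int hnorm ⊢
  have hα₂ : 0 < α ^ 2 := by positivity
  have hdesc := integral_le_add_inner_gradient_add_sq_of_lipschitz_gradient
    (hF_diff.differentiable one_ne_zero) (fun z => hF_smooth z x) hQs_int hFQs_int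
    ((integrable_mul_const_iff (inv_pos.2 hα₂).ne'.isUnit _).1 hRs_int)
  have hvar : ∫ ω, ‖Qs ω - x‖ ^ 2 ∂μ ≤ (1 + ν ^ 2) * s := by
    rw [integral_div, norm_sub_rev Q, div_le_iff₀ hα₂] at hnorm
    rwa [mul_div_assoc', div_mul_cancel₀ _ hα₂.ne'] at hnorm
  have hbias' : ⟪g, (∫ ω, Qs ω ∂μ) - Q⟫ ≤ M * (γ ^ 2 / 2 * s) := by
    rw [integral_sub hQs_int (integrable_const Q), integral_const, probReal_univ, one_smul,
      norm_sub_rev Q] at hbias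
    exact (real_inner_le_norm _ _).trans
      (mul_le_mul (hgrad_bdd x hxU) hbias (norm_nonneg _) ((norm_nonneg g).trans (hgrad_bdd x hxU)))
  have hdec : s / α ≤ ⟪g, x - Q⟫ := by
    rw [div_le_iff₀' hα]
    exact sq_norm_sub_le_mul_inner_of_projected_step hC_convex hx (hP_mem _) (hP_min _)
  have hK : (M * γ ^ 2 + L * (1 + ν ^ 2)) * s ≤ s / α := by
    have hKpos := one_div_pos.mp (hα.trans_le hstep)
    rw [le_div_iff₀ hKpos, mul_comm, ← le_div_iff₀ hα] at hstep
    simpa only [one_div_mul_eq_div] using mul_le_mul_of_nonneg_right hstep (sq_nonneg ‖x - Q‖)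
  have hsplit : ⟪g, (∫ ω, Qs ω ∂μ) - x⟫ = ⟪g, (∫ ω, Qs ω ∂μ) - Q⟫ - ⟪g, x - Q⟫ := by
    rw [← inner_sub_right, sub_sub_sub_cancel_right]
  have hgoal : -(α / 2) * (‖Q - x‖ ^ 2 / α ^ 2) = -(s / α) / 2 := by
    rw [norm_sub_rev]; field_simp; ring
  rw [hgoal]
  linarith [mul_le_mul_of_nonneg_left hvar hL.le]

/-- Under the descent theorem's conditions with the stronger step-size bound
`α ≤ 1/(Mγ² + L(1+ν²))`, each SPGD step satisfies
`E[F(x₊)] − F x ≤ −(α/2)‖R x‖²`. -/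
theorem stmt_10 {n : ℕ} {Ω : Type*} [MeasurableSpace Ω]
    (μ : Measure Ω) [IsProbabilityMeasure μ]
    (F : EuclideanSpace ℝ (Fin n) → ℝ) (hF_diff : ContDiff ℝ 1 F)
    (L : ℝ) (hL : 0 < L)
    (hF_smooth : ∀ x y, ‖gradient F x - gradient F y‖ ≤ L * ‖x - y‖)
    (C : Set (EuclideanSpace ℝ (Fin n)))
    (hC_ne : C.Nonempty) (hC_closed : IsClosed C) (hC_convex : Convex ℝ C)
    (P : EuclideanSpace ℝ (Fin n) → EuclideanSpace ℝ (Fin n))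
    (hP_mem : ∀ y, P y ∈ C)
    (hP_min : ∀ y, ∀ z ∈ C, ‖y - P y‖ ≤ ‖y - z‖)
    (α : ℝ) (hα : 0 < α)
    (x : EuclideanSpace ℝ (Fin n)) (hx : x ∈ C)
    -- the random subsampled projected-gradient step `x₊ = Q_S(x)`
    (Qs : Ω → EuclideanSpace ℝ (Fin n))
    (hQs_mem : ∀ ω, Qs ω ∈ C)
    (hQs_int : Integrable Qs μ)
    (hFQs_int : Integrable (fun ω => F (Qs ω)) μ)
    (hRs_int : Integrable (fun ω => ‖α⁻¹ • (x - Qs ω)‖ ^ 2) μ)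
    -- gradient bound on an open set containing the iterates
    (M : ℝ) (hM : 0 < M) (U : Set (EuclideanSpace ℝ (Fin n))) (hU : IsOpen U)
    (hxU : x ∈ U) (hQsU : ∀ ω, Qs ω ∈ U)
    (hgrad_bdd : ∀ y ∈ U, ‖gradient F y‖ ≤ M)
    (ν γ : ℝ) (hν : 0 < ν) (hγ : 0 < γ)
    (hnorm : ∫ ω, ‖α⁻¹ • (x - Qs ω)‖ ^ 2 ∂μ ≤
      (1 + ν ^ 2) * ‖α⁻¹ • (x - P (x - α • gradient F x))‖ ^ 2)
    (hbias : ‖∫ ω, (Qs ω - P (x - α • gradient F x)) ∂μ‖ ≤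
      γ ^ 2 / 2 * ‖P (x - α • gradient F x) - x‖ ^ 2)
    (hstep : α ≤ 1 / (M * γ ^ 2 + L * (1 + ν ^ 2))) :
    (∫ ω, F (Qs ω) ∂μ) - F x ≤
      -(α / 2) * ‖α⁻¹ • (x - P (x - α • gradient F x))‖ ^ 2 :=
  stmt_10_general μ F hF_diff L hL hF_smooth C hC_convex P hP_mem hP_min α hα x hx Qs hQs_int
    hFQs_int hRs_int M U hxU hgrad_bdd ν γ hnorm hbias hstep
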